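/- arXiv:1704.02804 — 2 statements merged into one kernel-verified Lean document; each statement's English description precedes it below -/
import Mathlib

section
/- For every integer m ≥ 1 one has the identity of bounded operators on ℓ²(W): h ∘ h_m = h_m ∘ h = h_{m+1} + p·h_m + (L_m − 1)·h_{m−1}, where L_1 = L + 1 and L_m = L for m ≥ 2 (and h_0 = 1). In particular h² = h_2 + p·h + L·1. -/
noncomputable section

open scoped ComplexInnerProductSpace

namespace UCoxMasa

/-- The universal Coxeter matrix on `Fin L`: all off-diagonal entries are `0` (representing ∞). -/
def Mat (L : ℕ) : CoxeterMatrix (Fin L) where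
  M := fun i j => if i = j then 1 else 0
  isSymm := by
    ext i j
    by_cases h : i = j <;> simp [Matrix.transpose, h, eq_comm]
  diagonal := fun i => by simp
  off_diagonal := fun i j h => by simp [h]

/-- The universal Coxeter group on `L` generators: free product of `L` copies of `ℤ/2ℤ`. -/
abbrev W (L : ℕ) : Type := (Mat L).Group

/-- The distinguished Coxeter system of `W L`. -/
def cs (L : ℕ) : CoxeterSystem (Mat L) (W L) := CoxeterMatrix.toCoxeterSystem (Mat L)

/-- The simple reflection associated to `i : Fin L`. -/
def σ {L : ℕ} (i : Fin L) : W L := (cs L).simple i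

/-- Word length on `W L` with respect to the generating set of simple reflections. -/
def len {L : ℕ} (w : W L) : ℕ := (cs L).length w

/-- The Hilbert space `ℓ²(W)`. -/
abbrev H (L : ℕ) : Type := lp (fun _ : W L => ℂ) 2

/-- The standard orthonormal basis vector `δ_w` of `ℓ²(W)`. -/
def δ {L : ℕ} (w : W L) : H L :=
  letI := Classical.decEq (W L)
  lp.single 2 w 1

/-- `V l`: the linear span of `{δ_w : ℓ(w) = l}`. -/
def V (L : ℕ) (l : ℕ) : Submodule ℂ (H L) :=
  Submodule.span ℂ {x : H L | ∃ w : W L, len w = l ∧ x = δ w}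

/-- `S_l`: the linear span of `q_l(h V_{l-1}) ∪ q_l(R_h V_{l-1})`,
given the projections `Q`, the operator `h` and the right operator `Rh`. -/
def Sl (L : ℕ) (Q : ℕ → (H L →L[ℂ] H L)) (h Rh : H L →L[ℂ] H L) (l : ℕ) :
    Submodule ℂ (H L) :=
  Submodule.span ℂ
    ({x : H L | ∃ y ∈ V L (l - 1), x = Q l (h y)} ∪
      {x : H L | ∃ y ∈ V L (l - 1), x = Q l (Rh y)})

end UCoxMasa

/-!
Words without two equal adjacent letters are normal forms in the universal Coxeter group: `W`
acts on them by prepending or cancelling a letter, which is well defined because the only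
relations are `s² = 1`. A reduced word has no two equal adjacent letters, so every `w ≠ 1` has
exactly one left descent, the first letter of its normal form. Hence
`T_s T_w = T_{sw} + [ℓ(sw) < ℓ(w)] p T_w`, and summing over `s` and over the sphere of radius
`m` gives `h h_m = Σ_v c_v T_v + p h_m`, where `v` runs over the spheres of radii `m ± 1` and
`c_v = #{s | ℓ(sv) = m}` is `1` on the outer sphere and `L` or `L - 1` on the inner one,
according as `v = 1` or not. This recurrence makes every `h_m` a polynomial in `h`, so `h_m`
commutes with `h`.
-/

theorem commute_of_three_term_recurrence {R A : Type*} [CommRing R] [Ring A] [Algebra R A]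
    {a : A} {x : ℕ → A} {α β : ℕ → R} (h0 : x 0 = 1) (h1 : x 1 = a)
    (hrec : ∀ m, 1 ≤ m → a * x m = x (m + 1) + α m • x m + β m • x (m - 1)) (n : ℕ) :
    Commute a (x n) := by
  induction n using Nat.strong_induction_on with
  | _ n ih =>
    match n with
    | 0 => exact h0 ▸ Commute.one_right a
    | 1 => exact h1 ▸ Commute.refl a
    | m + 2 =>
      have hx : x (m + 2) = a * x (m + 1) - α (m + 1) • x (m + 1) - β (m + 1) • x m := by
        rw [hrec (m + 1) (by omega), Nat.add_sub_cancel]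
        abel
      have h₁ := ih (m + 1) (by omega)
      have h₀ := ih m (by omega)
      rw [hx]
      exact (((Commute.refl a).mul_right h₁).sub_right (h₁.smul_right _)).sub_right
        (h₀.smul_right _)

namespace CoxeterSystem

variable {B W : Type*} [Group W] {M : CoxeterMatrix B}

theorem IsReduced.isChain_ne {cs : CoxeterSystem M W} :
    ∀ {ω : List B}, cs.IsReduced ω → ω.IsChain (· ≠ ·)
  | [], _ => .nil
  | [_], _ => .singleton _
  | i :: j :: ω, hω => by
    refine List.isChain_cons_cons.mpr ⟨?_, isChain_ne (ω := j :: ω) (hω.drop 1)⟩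
    rintro rfl
    have : cs.length (cs.wordProd ω) = ω.length + 2 := by
      simpa [IsReduced, wordProd_cons, simple_mul_simple_cancel_left] using hω
    linarith [cs.length_wordProd_le ω]

theorem finite_setOf_length_eq [Finite B] (cs : CoxeterSystem M W) (n : ℕ) :
    {w : W | cs.length w = n}.Finite :=
  ((List.finite_length_eq B n).image cs.wordProd).subset fun w hw => by
    obtain ⟨ω, hω, rfl⟩ := cs.exists_isReduced w
    exact ⟨ω, hω.eq.symm.trans hw, rfl⟩

end CoxeterSystem

namespace UCoxMasa

open Finset

variable {L : ℕ}

@[simp] theorem len_one : len (1 : W L) = 0 := (cs L).length_one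

theorem len_eq_zero_iff {w : W L} : len w = 0 ↔ w = 1 := (cs L).length_eq_zero_iff

@[simp] theorem len_σ (i : Fin L) : len (σ i) = 1 := (cs L).length_simple i

@[simp] theorem σ_mul_self (i : Fin L) : σ i * σ i = 1 := (cs L).simple_mul_simple_self i

@[simp] theorem σ_mul_σ_mul (i : Fin L) (w : W L) : σ i * (σ i * w) = w :=
  (cs L).simple_mul_simple_cancel_left i

theorem len_σ_mul (i : Fin L) (w : W L) :
    len (σ i * w) + 1 = len w ∨ len (σ i * w) = len w + 1 :=
  ((cs L).length_simple_mul w i).symm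

theorem len_σ_mul_add_one_of_lt {i : Fin L} {w : W L} (h : len (σ i * w) < len w) :
    len (σ i * w) + 1 = len w :=
  (len_σ_mul i w).resolve_right fun h' => by omega

theorem len_σ_mul_of_not_lt {i : Fin L} {w : W L} (h : ¬ len (σ i * w) < len w) :
    len (σ i * w) = len w + 1 :=
  (len_σ_mul i w).resolve_left fun h' => by omega

abbrev NormalWord (L : ℕ) : Type := {ω : List (Fin L) // ω.IsChain (· ≠ ·)}

def NormalWord.cons (i : Fin L) : NormalWord L → NormalWord L
  | ⟨[], _⟩ => ⟨[i], .singleton i⟩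
  | ⟨j :: ω, h⟩ =>
    if hij : i = j then ⟨ω, h.tail⟩
    else ⟨i :: j :: ω, List.isChain_cons_cons.mpr ⟨hij, h⟩⟩

theorem NormalWord.cons_of_ne_head {i : Fin L} {ω : List (Fin L)} (hω : ω.IsChain (· ≠ ·))
    (hi : ω.head? ≠ some i) :
    NormalWord.cons i ⟨ω, hω⟩ =
      ⟨i :: ω, hω.cons fun j hj => by rintro rfl; exact hi hj⟩ := by
  match ω, hω with
  | [], _ => rfl
  | j :: ω, _ =>
    have hij : i ≠ j := by rintro rfl; exact hi rfl
    simp [NormalWord.cons, hij]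

theorem NormalWord.cons_involutive (i : Fin L) : Function.Involutive (NormalWord.cons i) := by
  rintro ⟨_ | ⟨j, ω⟩, h⟩
  · simp [NormalWord.cons]
  · by_cases hij : i = j
    · subst hij
      simp only [NormalWord.cons, dite_true]
      exact NormalWord.cons_of_ne_head h.tail fun hk => by
        cases ω <;> simp_all
    · simp [NormalWord.cons, hij]

theorem NormalWord.isLiftable :
    (Mat L).IsLiftable fun i => (NormalWord.cons_involutive i).toPerm := by
  intro i j
  by_cases hij : i = j
  · subst hij
    ext x
    simp [Mat, (NormalWord.cons_involutive i) x]
  · simp [Mat, hij]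

def normalForm (w : W L) : NormalWord L :=
  (cs L).lift ⟨_, NormalWord.isLiftable⟩ w ⟨[], .nil⟩

theorem normalForm_σ_mul (i : Fin L) (w : W L) :
    normalForm (σ i * w) = (normalForm w).cons i := by
  simp [normalForm, σ, map_mul, (cs L).lift_apply_simple]

theorem normalForm_wordProd {ω : List (Fin L)} (hω : ω.IsChain (· ≠ ·)) :
    normalForm ((cs L).wordProd ω) = ⟨ω, hω⟩ := by
  induction ω with
  | nil => simp [normalForm]
  | cons i ω ih =>
    rw [CoxeterSystem.wordProd_cons, ← σ, normalForm_σ_mul, ih hω.tail]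
    exact NormalWord.cons_of_ne_head _ fun h => by cases ω <;> simp_all

theorem head_normalForm_of_descent {i : Fin L} {w : W L} (h : len (σ i * w) < len w) :
    (normalForm w).1.head? = some i := by
  obtain ⟨ω, hω, hv⟩ := (cs L).exists_isReduced (σ i * w)
  have hwi : w = (cs L).wordProd (i :: ω) := by
    rw [CoxeterSystem.wordProd_cons, ← hv, ← σ, σ_mul_σ_mul]
  have hred : (cs L).IsReduced (i :: ω) := by
    rw [CoxeterSystem.IsReduced, ← hwi, List.length_cons, ← hω.eq, ← hv]
    exact (len_σ_mul_add_one_of_lt h).symm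
  rw [hwi, normalForm_wordProd hred.isChain_ne]
  rfl

theorem leftDescent_unique {i j : Fin L} {w : W L} (hi : len (σ i * w) < len w)
    (hj : len (σ j * w) < len w) : i = j := by
  simpa [head_normalForm_of_descent hi] using head_normalForm_of_descent hj

theorem card_leftDescents_of_ne_one {w : W L} (hw : w ≠ 1) :
    #{i | len (σ i * w) < len w} = 1 := by
  obtain ⟨i, hi⟩ := (cs L).exists_leftDescent_of_ne_one hw
  exact card_eq_one.mpr
    ⟨i, ext fun j => by simpa using ⟨(leftDescent_unique · hi), (· ▸ hi)⟩⟩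

theorem σ_injective : Function.Injective (σ : Fin L → W L) := by
  intro i j hij
  have hlt : ∀ k : Fin L, len (σ k * σ k) < len (σ k) := by simp
  exact leftDescent_unique (hlt i) (hij ▸ hlt j)

variable (L) in
def sphere (n : ℕ) : Finset (W L) := ((cs L).finite_setOf_length_eq n).toFinset

@[simp] theorem mem_sphere {n : ℕ} {w : W L} : w ∈ sphere L n ↔ len w = n :=
  Set.Finite.mem_toFinset _

theorem tsum_subtype_len_eq {E : Type*} [AddCommMonoid E] [TopologicalSpace E] (f : W L → E)
    (n : ℕ) :
    ∑' w : {w : W L // len w = n}, f w = ∑ w ∈ sphere L n, f w := by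
  rw [← Finset.tsum_subtype]
  exact ((Equiv.subtypeEquivRight fun _ => mem_sphere).tsum_eq _).symm

theorem sphere_zero : sphere L 0 = {1} := by
  ext w
  simp [len_eq_zero_iff]

theorem sum_sphere_one {M : Type*} [AddCommMonoid M] (f : W L → M) :
    ∑ w ∈ sphere L 1, f w = ∑ i, f (σ i) := by
  have : sphere L 1 = univ.map ⟨σ, σ_injective⟩ := by
    ext w
    simp [len, (cs L).length_eq_one_iff, σ, eq_comm]
  rw [this, sum_map]
  rfl

theorem card_σ_mul_len_eq_of_len_eq_succ {v : W L} {m : ℕ} (hv : len v = m + 1) :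
    #{i | len (σ i * v) = m} = 1 := by
  have hv1 : v ≠ 1 := by rintro rfl; simp at hv
  rw [← card_leftDescents_of_ne_one hv1]
  congr 1
  exact filter_congr fun i _ => by rcases len_σ_mul i v with h | h <;> omega

theorem card_σ_mul_len_eq_of_succ_len_eq {v : W L} {m : ℕ} (hv : len v + 1 = m) :
    #{i | len (σ i * v) = m} = if m = 1 then L else L - 1 := by
  split_ifs with hm
  · obtain rfl : v = 1 := len_eq_zero_iff.mp (by omega)
    simp [hm]
  · have hv1 : v ≠ 1 := by rintro rfl; simp at hv; omega
    have hasc : #{i | len (σ i * v) = m} = #{i | ¬ len (σ i * v) < len v} := by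
      congr 1
      exact filter_congr fun i _ => by rcases len_σ_mul i v with h | h <;> omega
    have htot := card_filter_add_card_filter_not (s := univ) (fun i => len (σ i * v) < len v)
    rw [card_univ, Fintype.card_fin, card_leftDescents_of_ne_one hv1] at htot
    omega

theorem sum_sphere_sum_σ_mul {M : Type*} [AddCommMonoid M] (f : W L → M) {m : ℕ}
    (hm : 1 ≤ m) :
    ∑ w ∈ sphere L m, ∑ i, f (σ i * w) =
      ∑ v ∈ sphere L (m + 1), f v +
        (if m = 1 then L else L - 1) • ∑ v ∈ sphere L (m - 1), f v := by
  classical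
  have hreindex : ∀ i, ∑ w ∈ sphere L m, f (σ i * w) =
      ∑ v ∈ sphere L (m + 1) ∪ sphere L (m - 1), if len (σ i * v) = m then f v else 0 := by
    intro i
    rw [← sum_filter]
    refine sum_nbij' (σ i * ·) (σ i * ·) (fun w hw => ?_) (fun v hv => ?_)
      (fun w _ => σ_mul_σ_mul i w) (fun v _ => σ_mul_σ_mul i v) (fun _ _ => rfl)
    · simp only [mem_filter, mem_union, mem_sphere, σ_mul_σ_mul] at hw ⊢
      rcases len_σ_mul i w with h | h <;> omega
    · simp only [mem_filter, mem_union, mem_sphere] at hv ⊢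
      exact hv.2
  have hdisj : Disjoint (sphere L (m + 1)) (sphere L (m - 1)) :=
    disjoint_left.mpr fun v h₁ h₂ => by simp only [mem_sphere] at h₁ h₂; omega
  calc ∑ w ∈ sphere L m, ∑ i, f (σ i * w)
      = ∑ v ∈ sphere L (m + 1) ∪ sphere L (m - 1), #{i | len (σ i * v) = m} • f v := by
        rw [sum_comm]
        simp_rw [hreindex]
        rw [sum_comm]
        exact sum_congr rfl fun v _ => by rw [← sum_filter, sum_const]
    _ = _ := by
        rw [sum_union hdisj, smul_sum]
        congr 1
        · exact sum_congr rfl fun v hv => by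
            rw [card_σ_mul_len_eq_of_len_eq_succ (mem_sphere.mp hv), one_smul]
        · exact sum_congr rfl fun v hv => by
            rw [card_σ_mul_len_eq_of_succ_len_eq (by rw [mem_sphere.mp hv]; omega)]

theorem ext_δ {A B : H L →L[ℂ] H L} (h : ∀ w, A (δ w) = B (δ w)) : A = B := by
  classical
  ext f
  have hf : HasSum (fun w => f w • δ w) f := by
    simpa [δ, ← lp.single_smul] using lp.hasSum_single (p := 2) (by norm_num) f
  rw [← (A.hasSum hf).tsum_eq, ← (B.hasSum hf).tsum_eq]
  simp only [map_smul, h]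

section HeckeOperators

variable {p : ℂ} {T : Fin L → H L →L[ℂ] H L} {Tw : W L → H L →L[ℂ] H L}
  (hT : ∀ (s : Fin L) (w : W L),
    T s (δ w) = if len (σ s * w) < len w then δ (σ s * w) + p • δ w else δ (σ s * w))
  (hTw1 : Tw 1 = 1)
  (hTwrec : ∀ (s : Fin L) (w : W L), len (σ s * w) < len w → Tw w = T s ∘L Tw (σ s * w))

include hT in
theorem T_mul_self (i : Fin L) : T i * T i = 1 + p • T i := by
  refine ext_δ fun w => ?_
  by_cases h : len (σ i * w) < len w
  · have h' : ¬ len w < len (σ i * w) := by omega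
    simp only [mul_apply_eq_comp, add_apply, one_apply_eq_self, smul_apply, hT, h, h',
      if_true, if_false, map_add, map_smul, σ_mul_σ_mul]
  · have h' : len w < len (σ i * w) := by rw [len_σ_mul_of_not_lt h]; omega
    simp [hT, h, h']

include hT hTwrec in
theorem T_mul_Tw (i : Fin L) (w : W L) :
    T i * Tw w = Tw (σ i * w) + if len (σ i * w) < len w then p • Tw w else 0 := by
  by_cases h : len (σ i * w) < len w
  · have hw : Tw w = T i * Tw (σ i * w) := hTwrec i w h
    rw [if_pos h, hw, ← mul_assoc, T_mul_self hT, add_mul, one_mul, smul_mul_assoc]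
  · have h' : len (σ i * (σ i * w)) < len (σ i * w) := by
      rw [σ_mul_σ_mul, len_σ_mul_of_not_lt h]; omega
    rw [if_neg h, add_zero, hTwrec i (σ i * w) h', σ_mul_σ_mul]
    rfl

include hTw1 hTwrec in
theorem Tw_σ (i : Fin L) : Tw (σ i) = T i := by
  rw [hTwrec i (σ i) (by simp), σ_mul_self, hTw1]
  rfl

include hT hTwrec in
theorem sum_T_mul_sum_sphere {m : ℕ} (hm : 1 ≤ m) :
    (∑ i, T i) * ∑ w ∈ sphere L m, Tw w =
      ∑ w ∈ sphere L (m + 1), Tw w + p • ∑ w ∈ sphere L m, Tw w +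
        (if m = 1 then L else L - 1) • ∑ w ∈ sphere L (m - 1), Tw w := by
  have hdesc : ∀ w ∈ sphere L m,
      (∑ i, if len (σ i * w) < len w then p • Tw w else 0) = p • Tw w := by
    intro w hw
    have hw1 : w ≠ 1 := by rintro rfl; simp at hw; omega
    rw [← sum_filter, sum_const, card_leftDescents_of_ne_one hw1, one_smul]
  calc (∑ i, T i) * ∑ w ∈ sphere L m, Tw w
      = ∑ w ∈ sphere L m, ∑ i,
          (Tw (σ i * w) + if len (σ i * w) < len w then p • Tw w else 0) := by
        rw [sum_mul_sum, sum_comm]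
        simp_rw [T_mul_Tw hT hTwrec]
    _ = _ := by
        rw [sum_congr rfl fun w _ => sum_add_distrib, sum_add_distrib, sum_sphere_sum_σ_mul _ hm,
          sum_congr rfl hdesc, ← smul_sum]
        abel

end HeckeOperators

theorem statement3_general
    (L : ℕ) (hL : 3 ≤ L) (p : ℝ)
    (T : Fin L → H L →L[ℂ] H L)
    (hT : ∀ (s : Fin L) (w : W L),
      T s (δ w) =
        if len (σ s * w) < len w then δ (σ s * w) + (p : ℂ) • δ w else δ (σ s * w))
    (h : H L →L[ℂ] H L) (hh : h = ∑ s, T s)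
    (Tw : W L → H L →L[ℂ] H L) (hTw1 : Tw 1 = 1)
    (hTwrec : ∀ (s : Fin L) (w : W L), len (σ s * w) < len w →
      Tw w = T s ∘L Tw (σ s * w))
    (hn : ℕ → H L →L[ℂ] H L)
    (hhn : ∀ n : ℕ, hn n = ∑' w : {w : W L // len w = n}, Tw (w : W L)) :
    (∀ m : ℕ, 1 ≤ m →
      h * hn m = hn m * h ∧
      h * hn m = hn (m + 1) + (p : ℂ) • hn m +
        ((if m = 1 then (L : ℂ) + 1 else (L : ℂ)) - 1) • hn (m - 1))
    ∧ h * h = hn 2 + (p : ℂ) • h + (L : ℂ) • (1 : H L →L[ℂ] H L) := by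
  have hsum (n : ℕ) : hn n = ∑ w ∈ sphere L n, Tw w :=
    (hhn n).trans (tsum_subtype_len_eq Tw n)
  have hn0 : hn 0 = 1 := by rw [hsum, sphere_zero, sum_singleton, hTw1]
  have hn1 : hn 1 = h := by
    rw [hsum, sum_sphere_one, hh]
    exact sum_congr rfl fun i _ => Tw_σ hTw1 hTwrec i
  have hcoef (m : ℕ) (x : H L →L[ℂ] H L) :
      ((if m = 1 then (L : ℂ) + 1 else (L : ℂ)) - 1) • x =
        (if m = 1 then L else L - 1) • x := by
    rw [← Nat.cast_smul_eq_nsmul ℂ]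
    split_ifs <;> push_cast [Nat.cast_sub (by omega : 1 ≤ L)] <;> ring_nf
  have hrec (m : ℕ) (hm : 1 ≤ m) : h * hn m = hn (m + 1) + (p : ℂ) • hn m +
      ((if m = 1 then (L : ℂ) + 1 else (L : ℂ)) - 1) • hn (m - 1) := by
    rw [hcoef, hh]
    simp only [hsum]
    exact sum_T_mul_sum_sphere hT hTwrec hm
  refine ⟨fun m hm => ⟨(commute_of_three_term_recurrence hn0 hn1 hrec m).eq, hrec m hm⟩, ?_⟩
  simpa [hn0, hn1] using hrec 1 le_rfl

theorem statement3
    (L : ℕ) (hL : 3 ≤ L) (q p : ℝ) (hq : 0 < q) (hq1 : q ≤ 1)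
    (hp : p = (q - 1) / Real.sqrt q)
    (T : Fin L → H L →L[ℂ] H L)
    (hT : ∀ (s : Fin L) (w : W L),
      T s (δ w) =
        if len (σ s * w) < len w then δ (σ s * w) + (p : ℂ) • δ w else δ (σ s * w))
    (h : H L →L[ℂ] H L) (hh : h = ∑ s, T s)
    (Tw : W L → H L →L[ℂ] H L) (hTw1 : Tw 1 = 1)
    (hTwrec : ∀ (s : Fin L) (w : W L), len (σ s * w) < len w →
      Tw w = T s ∘L Tw (σ s * w))
    (hn : ℕ → H L →L[ℂ] H L)
    (hhn : ∀ n : ℕ, hn n = ∑' w : {w : W L // len w = n}, Tw (w : W L)) :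
    (∀ m : ℕ, 1 ≤ m →
      h * hn m = hn m * h ∧
      h * hn m = hn (m + 1) + (p : ℂ) • hn m +
        ((if m = 1 then (L : ℂ) + 1 else (L : ℂ)) - 1) • hn (m - 1))
    ∧ h * h = hn 2 + (p : ℂ) • h + (L : ℂ) • (1 : H L →L[ℂ] H L) :=
  statement3_general L hL p T hT h hh Tw hTw1 hTwrec hn hhn

end UCoxMasa
end
end

section
/- Let a be a real number with |a| < 1. Then there exist constants B > 0 and C > 0 (depending only on a) such that for every k ∈ ℕ and all complex numbers λ_1, …, λ_k, the Hermitian sum Σ_{i,j=1}^{k} λ_i · conj(λ_j) · a^{|i−j|} is a real number and B·Σ_{i=1}^{k} |λ_i|² ≤ Σ_{i,j=1}^{k} λ_i · conj(λ_j) · a^{|i−j|} ≤ C·Σ_{i=1}^{k} |λ_i|². -/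
noncomputable section

open scoped ComplexInnerProductSpace

/-!
The Kac–Murdock–Szegő matrix `T = (a ^ |i - j|)` factors as `T = Uᵀ D U`, with `U = kmsFactor a`
upper triangular, `U n i = a ^ (i - n)` for `n ≤ i`, and `D = kmsPivot a = diag (1, 1 - a², …)`.
Hence the Hermitian form equals `∑ₙ Dₙ |Xₙ|²` with `X = U λ = kmsTail a λ`: it is real and lies
between `(1 - a²) ‖X‖²` and `‖X‖²`. The Schur test gives `‖U‖ ≤ (1 - |a|)⁻¹`, and
`U⁻¹ = 1 - a S`, with `S` the shift, gives `‖λ‖ ≤ 2 ‖X‖`.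
-/

open Finset

/-- The Schur test for a nonnegative kernel. -/
theorem sum_sq_sum_mul_le_of_sum_le {ι κ : Type*} (s : Finset ι) (t : Finset κ)
    (K : ι → κ → ℝ) (u : κ → ℝ) (hK : ∀ n ∈ s, ∀ i ∈ t, 0 ≤ K n i) {R C : ℝ} (hR₀ : 0 ≤ R)
    (hR : ∀ n ∈ s, ∑ i ∈ t, K n i ≤ R) (hC : ∀ i ∈ t, ∑ n ∈ s, K n i ≤ C) :
    ∑ n ∈ s, (∑ i ∈ t, K n i * u i) ^ 2 ≤ R * C * ∑ i ∈ t, u i ^ 2 := by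
  have hrow : ∀ n ∈ s, (∑ i ∈ t, K n i * u i) ^ 2 ≤ R * ∑ i ∈ t, K n i * u i ^ 2 := by
    intro n hn
    have hKu : 0 ≤ ∑ i ∈ t, K n i * u i ^ 2 :=
      sum_nonneg fun i hi => mul_nonneg (hK n hn i hi) (sq_nonneg _)
    calc (∑ i ∈ t, K n i * u i) ^ 2 ≤ (∑ i ∈ t, K n i) * ∑ i ∈ t, K n i * u i ^ 2 :=
          sum_sq_le_sum_mul_sum_of_sq_le_mul t (hK n hn)
            (fun i hi => mul_nonneg (hK n hn i hi) (sq_nonneg _)) fun i _ => le_of_eq (by ring)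
      _ ≤ R * ∑ i ∈ t, K n i * u i ^ 2 := mul_le_mul_of_nonneg_right (hR n hn) hKu
  calc ∑ n ∈ s, (∑ i ∈ t, K n i * u i) ^ 2 ≤ ∑ n ∈ s, R * ∑ i ∈ t, K n i * u i ^ 2 :=
        sum_le_sum hrow
    _ = R * ∑ i ∈ t, (∑ n ∈ s, K n i) * u i ^ 2 := by
        rw [← mul_sum, sum_comm]
        simp only [sum_mul]
    _ ≤ R * ∑ i ∈ t, C * u i ^ 2 :=
        mul_le_mul_of_nonneg_left (sum_le_sum fun i hi =>
          mul_le_mul_of_nonneg_right (hC i hi) (sq_nonneg _)) hR₀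
    _ = R * C * ∑ i ∈ t, u i ^ 2 := by rw [← mul_sum, mul_assoc]

theorem geom_sum_le_inv_one_sub {r : ℝ} (h0 : 0 ≤ r) (h1 : r < 1) (N : ℕ) :
    ∑ m ∈ range N, r ^ m ≤ (1 - r)⁻¹ := by
  have h := geom_sum_Ico_le_of_lt_one (m := 0) (n := N) h0 h1
  rwa [← range_eq_Ico, pow_zero, one_div] at h

namespace UCoxMasa

def kmsFactor (a : ℝ) (n i : ℕ) : ℝ := if n ≤ i then a ^ (i - n) else 0

def kmsPivot (a : ℝ) (n : ℕ) : ℝ := if n = 0 then 1 else 1 - a ^ 2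

def kmsTail {k : ℕ} (a : ℝ) (lam : Fin k → ℂ) (n : ℕ) : ℂ :=
  ∑ j : Fin k, (kmsFactor a n j : ℂ) * lam j

theorem kmsFactor_of_le (a : ℝ) {n i : ℕ} (h : n ≤ i) : kmsFactor a n i = a ^ (i - n) :=
  if_pos h

theorem kmsFactor_of_lt (a : ℝ) {n i : ℕ} (h : i < n) : kmsFactor a n i = 0 :=
  if_neg (Nat.not_le.mpr h)

theorem kmsFactor_nonneg {r : ℝ} (hr : 0 ≤ r) (n i : ℕ) : 0 ≤ kmsFactor r n i := by
  unfold kmsFactor; split_ifs <;> positivity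

theorem abs_kmsFactor (a : ℝ) (n i : ℕ) : |kmsFactor a n i| = kmsFactor |a| n i := by
  unfold kmsFactor; split_ifs <;> simp [abs_pow]

theorem one_sub_sq_le_kmsPivot (a : ℝ) (n : ℕ) : 1 - a ^ 2 ≤ kmsPivot a n := by
  unfold kmsPivot; split_ifs <;> nlinarith [sq_nonneg a]

theorem kmsPivot_le_one (a : ℝ) (n : ℕ) : kmsPivot a n ≤ 1 := by
  unfold kmsPivot; split_ifs <;> nlinarith [sq_nonneg a]

theorem sum_kmsPivot_mul_pow_sq (a : ℝ) (i : ℕ) :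
    ∑ n ∈ range (i + 1), kmsPivot a n * (a ^ (i - n)) ^ 2 = 1 := by
  induction i with
  | zero => simp [kmsPivot]
  | succ i ih =>
    have hshift : ∑ n ∈ range (i + 1), kmsPivot a n * (a ^ (i + 1 - n)) ^ 2 =
        a ^ 2 * ∑ n ∈ range (i + 1), kmsPivot a n * (a ^ (i - n)) ^ 2 := by
      rw [mul_sum]
      refine sum_congr rfl fun n hn => ?_
      rw [Nat.sub_add_comm (mem_range_succ_iff.mp hn), pow_succ]
      ring
    rw [sum_range_succ, hshift, ih, kmsPivot, if_neg i.succ_ne_zero]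
    simp

theorem sum_kmsPivot_mul_kmsFactor_of_le (a : ℝ) {k i j : ℕ} (hj : j < k) (hij : i ≤ j) :
    ∑ n ∈ range k, kmsPivot a n * kmsFactor a n i * kmsFactor a n j = a ^ (j - i) := by
  rw [← sum_subset (range_subset_range.mpr (by omega : i + 1 ≤ k)) fun n _ hn => by
    rw [kmsFactor_of_lt a (by simpa using hn : i < n), mul_zero, zero_mul]]
  rw [← mul_one (a ^ (j - i)), ← sum_kmsPivot_mul_pow_sq a i, mul_sum]
  refine sum_congr rfl fun n hn => ?_
  have hni : n ≤ i := mem_range_succ_iff.mp hn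
  rw [kmsFactor_of_le a hni, kmsFactor_of_le a (hni.trans hij),
    show j - n = (j - i) + (i - n) by omega, pow_add]
  ring

/-- The `LDLᵀ` factorization of the Kac–Murdock–Szegő matrix `(a ^ |i - j|)`. -/
theorem sum_kmsPivot_mul_kmsFactor (a : ℝ) {k i j : ℕ} (hi : i < k) (hj : j < k) :
    ∑ n ∈ range k, kmsPivot a n * kmsFactor a n i * kmsFactor a n j =
      a ^ ((i : ℤ) - (j : ℤ)).natAbs := by
  rcases le_total i j with hij | hji
  · rw [sum_kmsPivot_mul_kmsFactor_of_le a hj hij]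
    congr 1
    omega
  · simp_rw [mul_assoc, mul_comm (kmsFactor a _ i), ← mul_assoc]
    rw [sum_kmsPivot_mul_kmsFactor_of_le a hi hji]
    congr 1
    omega

theorem sum_mul_conj_mul_pow_eq_sum_kmsPivot {k : ℕ} (a : ℝ) (lam : Fin k → ℂ) :
    ∑ i : Fin k, ∑ j : Fin k,
        lam i * (starRingEnd ℂ) (lam j) * ((a ^ ((i : ℤ) - (j : ℤ)).natAbs : ℝ) : ℂ) =
      ((∑ n ∈ range k, kmsPivot a n * ‖kmsTail a lam n‖ ^ 2 : ℝ) : ℂ) := by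
  calc _ = ∑ i : Fin k, ∑ j : Fin k, ∑ n ∈ range k, (kmsPivot a n : ℂ) *
        ((kmsFactor a n i * lam i) * (starRingEnd ℂ) (kmsFactor a n j * lam j)) := by
        refine sum_congr rfl fun i _ => sum_congr rfl fun j _ => ?_
        rw [← sum_kmsPivot_mul_kmsFactor a i.isLt j.isLt]
        push_cast
        rw [mul_sum]
        refine sum_congr rfl fun n _ => ?_
        rw [map_mul, Complex.conj_ofReal]
        ring
    _ = _ := by
        push_cast
        simp_rw [← Complex.mul_conj', kmsTail, map_sum, sum_mul_sum, mul_sum]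
        conv_rhs => rw [Finset.sum_comm]
        refine Finset.sum_congr rfl fun i _ => ?_
        rw [Finset.sum_comm]

theorem kmsFactor_sub_mul_kmsFactor_succ (a : ℝ) (n i : ℕ) :
    kmsFactor a n i - a * kmsFactor a (n + 1) i = if i = n then 1 else 0 := by
  rcases lt_trichotomy i n with h | rfl | h
  · rw [kmsFactor_of_lt a h, kmsFactor_of_lt a (h.trans n.lt_succ_self), if_neg h.ne]
    ring
  · simp [kmsFactor]
  · rw [kmsFactor_of_le a h.le, kmsFactor_of_le a (Nat.succ_le_of_lt h), if_neg h.ne',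
      ← pow_succ', show i - (n + 1) + 1 = i - n by omega, sub_self]

theorem kmsTail_sub_mul_kmsTail_succ {k : ℕ} (a : ℝ) (lam : Fin k → ℂ) (i : Fin k) :
    kmsTail a lam i - a * kmsTail a lam (i + 1) = lam i := by
  simp_rw [kmsTail, mul_sum, ← sum_sub_distrib, ← mul_assoc, ← sub_mul]
  norm_cast
  simp only [kmsFactor_sub_mul_kmsFactor_succ, Fin.val_inj]
  simp [apply_ite Complex.ofReal]

theorem kmsTail_of_le {k : ℕ} (a : ℝ) (lam : Fin k → ℂ) {n : ℕ} (hn : k ≤ n) :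
    kmsTail a lam n = 0 :=
  sum_eq_zero fun j _ => by simp [kmsFactor_of_lt a (j.isLt.trans_le hn)]

theorem sum_norm_sq_le_four_mul_sum_kmsTail {a : ℝ} (ha : |a| ≤ 1) {k : ℕ} (lam : Fin k → ℂ) :
    ∑ i : Fin k, ‖lam i‖ ^ 2 ≤ 4 * ∑ n ∈ range k, ‖kmsTail a lam n‖ ^ 2 := by
  set X := kmsTail a lam
  have hpoint (i : Fin k) : ‖lam i‖ ^ 2 ≤ 2 * ‖X i‖ ^ 2 + 2 * ‖X (i + 1)‖ ^ 2 := by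
    have h : ‖lam i‖ ≤ ‖X i‖ + ‖X (i + 1)‖ := by
      rw [← kmsTail_sub_mul_kmsTail_succ a lam i]
      refine (norm_sub_le _ _).trans ?_
      gcongr
      rw [norm_mul, Complex.norm_real, Real.norm_eq_abs]
      exact mul_le_of_le_one_left (norm_nonneg _) ha
    nlinarith [norm_nonneg (lam i), sq_nonneg (‖X i‖ - ‖X (i + 1)‖)]
  have hshift : ∑ n ∈ range k, ‖X (n + 1)‖ ^ 2 ≤ ∑ n ∈ range k, ‖X n‖ ^ 2 := by
    have h := sum_range_succ' (fun n => ‖X n‖ ^ 2) k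
    have hXk : X k = 0 := kmsTail_of_le a lam le_rfl
    rw [sum_range_succ, hXk, norm_zero] at h
    nlinarith [sq_nonneg ‖X 0‖]
  calc ∑ i : Fin k, ‖lam i‖ ^ 2
      ≤ ∑ n ∈ range k, (2 * ‖X n‖ ^ 2 + 2 * ‖X (n + 1)‖ ^ 2) := by
        rw [← Fin.sum_univ_eq_sum_range]
        exact sum_le_sum fun i _ => hpoint i
    _ ≤ 4 * ∑ n ∈ range k, ‖X n‖ ^ 2 := by
        rw [sum_add_distrib, ← mul_sum, ← mul_sum]
        linarith

theorem sum_kmsFactor_row_le {r : ℝ} (h0 : 0 ≤ r) (h1 : r < 1) (k n : ℕ) :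
    ∑ i : Fin k, kmsFactor r n i ≤ (1 - r)⁻¹ := by
  rw [Fin.sum_univ_eq_sum_range (kmsFactor r n)]
  calc ∑ i ∈ range k, kmsFactor r n i ≤ ∑ i ∈ range (n + k), kmsFactor r n i :=
        sum_le_sum_of_subset_of_nonneg (range_mono (by omega))
          fun i _ _ => kmsFactor_nonneg h0 n i
    _ = ∑ m ∈ range k, r ^ m := by
        rw [sum_range_add, sum_eq_zero fun i hi => kmsFactor_of_lt r (by simpa using hi),
          zero_add]
        simp [kmsFactor]
    _ ≤ (1 - r)⁻¹ := geom_sum_le_inv_one_sub h0 h1 k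

theorem sum_kmsFactor_col_le {r : ℝ} (h0 : 0 ≤ r) (h1 : r < 1) (k i : ℕ) :
    ∑ n ∈ range k, kmsFactor r n i ≤ (1 - r)⁻¹ := by
  calc ∑ n ∈ range k, kmsFactor r n i ≤ ∑ n ∈ range (k + (i + 1)), kmsFactor r n i :=
        sum_le_sum_of_subset_of_nonneg (range_mono (by omega))
          fun n _ _ => kmsFactor_nonneg h0 n i
    _ = ∑ n ∈ range (i + 1), r ^ (i - n) := by
        rw [← sum_subset (range_mono (by omega : i + 1 ≤ k + (i + 1))) fun n _ hn =>
          kmsFactor_of_lt r (by simpa using hn)]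
        exact sum_congr rfl fun n hn => kmsFactor_of_le r (mem_range_succ_iff.mp hn)
    _ = ∑ m ∈ range (i + 1), r ^ m := by
        simpa using sum_range_reflect (r ^ ·) (i + 1)
    _ ≤ (1 - r)⁻¹ := geom_sum_le_inv_one_sub h0 h1 _

theorem sum_norm_sq_kmsTail_le {a : ℝ} (ha : |a| < 1) {k : ℕ} (lam : Fin k → ℂ) :
    ∑ n ∈ range k, ‖kmsTail a lam n‖ ^ 2 ≤ (1 - |a|)⁻¹ ^ 2 * ∑ i : Fin k, ‖lam i‖ ^ 2 := by
  have hX (n : ℕ) : ‖kmsTail a lam n‖ ≤ ∑ i : Fin k, kmsFactor |a| n i * ‖lam i‖ := by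
    refine (norm_sum_le _ _).trans_eq (sum_congr rfl fun i _ => ?_)
    rw [norm_mul, Complex.norm_real, Real.norm_eq_abs, abs_kmsFactor]
  calc ∑ n ∈ range k, ‖kmsTail a lam n‖ ^ 2
      ≤ ∑ n ∈ range k, (∑ i : Fin k, kmsFactor |a| n i * ‖lam i‖) ^ 2 :=
        sum_le_sum fun n _ => pow_le_pow_left₀ (norm_nonneg _) (hX n) 2
    _ ≤ (1 - |a|)⁻¹ * (1 - |a|)⁻¹ * ∑ i : Fin k, ‖lam i‖ ^ 2 :=
        sum_sq_sum_mul_le_of_sum_le (range k) univ (fun n (i : Fin k) => kmsFactor |a| n i)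
          (fun i => ‖lam i‖) (fun n _ i _ => kmsFactor_nonneg (abs_nonneg a) n i)
          (inv_nonneg.mpr (by linarith))
          (fun n _ => sum_kmsFactor_row_le (abs_nonneg a) ha k n)
          (fun i _ => sum_kmsFactor_col_le (abs_nonneg a) ha k i)
    _ = (1 - |a|)⁻¹ ^ 2 * ∑ i : Fin k, ‖lam i‖ ^ 2 := by ring

theorem statement18 (a : ℝ) (ha : |a| < 1) :
    ∃ B C : ℝ, 0 < B ∧ 0 < C ∧
      ∀ (k : ℕ) (lam : Fin k → ℂ), ∃ z : ℝ,
        (∑ i : Fin k, ∑ j : Fin k,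
          lam i * (starRingEnd ℂ) (lam j) *
            ((a ^ ((i : ℤ) - (j : ℤ)).natAbs : ℝ) : ℂ)) = (z : ℂ) ∧
        B * ∑ i : Fin k, ‖lam i‖ ^ 2 ≤ z ∧
        z ≤ C * ∑ i : Fin k, ‖lam i‖ ^ 2 := by
  have ha2 : a ^ 2 < 1 := (sq_lt_one_iff_abs_lt_one a).mpr ha
  have hC : 0 < (1 - |a|)⁻¹ ^ 2 := pow_pos (inv_pos.mpr (sub_pos.mpr ha)) 2
  refine ⟨(1 - a ^ 2) / 4, (1 - |a|)⁻¹ ^ 2, by linarith, hC,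
    fun k lam => ⟨_, sum_mul_conj_mul_pow_eq_sum_kmsPivot a lam, ?_, ?_⟩⟩
  · calc (1 - a ^ 2) / 4 * ∑ i : Fin k, ‖lam i‖ ^ 2
        ≤ ∑ n ∈ range k, (1 - a ^ 2) * ‖kmsTail a lam n‖ ^ 2 := by
          rw [← mul_sum]
          nlinarith [sum_norm_sq_le_four_mul_sum_kmsTail ha.le lam]
      _ ≤ ∑ n ∈ range k, kmsPivot a n * ‖kmsTail a lam n‖ ^ 2 :=
          sum_le_sum fun n _ =>
            mul_le_mul_of_nonneg_right (one_sub_sq_le_kmsPivot a n) (sq_nonneg _)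
  · calc ∑ n ∈ range k, kmsPivot a n * ‖kmsTail a lam n‖ ^ 2
        ≤ ∑ n ∈ range k, ‖kmsTail a lam n‖ ^ 2 :=
          sum_le_sum fun n _ => mul_le_of_le_one_left (sq_nonneg _) (kmsPivot_le_one a n)
      _ ≤ (1 - |a|)⁻¹ ^ 2 * ∑ i : Fin k, ‖lam i‖ ^ 2 := sum_norm_sq_kmsTail_le ha lam

end UCoxMasa
end
end
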